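/- Let μ ≥ 1 be an integer, and let χP ≤ -1 be an integer, let f ≥ 1 be an integer, let b ≥ 1 be an integer (number of boundary components of P), and let d be an integer with d ≤ μ·b. Suppose χP + b ≤ 2 (Euler characteristic of the closed surface obtained by capping off). Then 1 - d - f + χP - 3μ·χP + 3μf/2 ≥ 0 (as rationals). -/
import Mathlib


/-- Case 2 (χ(P) ≤ -1) of Lemma 6.7 of Scharlemann–Schultens: for integers
μ ≥ 1, χP ≤ -1, f ≥ 1, b ≥ 1 with d ≤ μ·b and χP + b ≤ 2, we have
1 - d - f + χP - 3μχP + 3μf/2 ≥ 0 in ℚ. -/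
theorem case_two_arith (μ χP f b d : ℤ) (hμ : 1 ≤ μ) (hχ : χP ≤ -1)
    (hf : 1 ≤ f) (hb : 1 ≤ b) (hd : d ≤ μ * b) (hcap : χP + b ≤ 2) :
    (0 : ℚ) ≤ 1 - (d : ℚ) - f + χP - 3 * μ * χP + 3 * μ * f / 2 := by
  have hμ' : (1:ℚ) ≤ μ := by exact_mod_cast hμ
  have hχ' : (χP:ℚ) ≤ -1 := by exact_mod_cast hχ
  have hf' : (1:ℚ) ≤ f := by exact_mod_cast hf
  have hb' : (1:ℚ) ≤ b := by exact_mod_cast hb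
  have hd' : (d:ℚ) ≤ μ * b := by exact_mod_cast hd
  have hcap' : (χP:ℚ) + b ≤ 2 := by exact_mod_cast hcap
  nlinarith [mul_le_mul_of_nonneg_left hcap' (by linarith : (0:ℚ) ≤ μ), mul_le_mul_of_nonneg_left hf' (by linarith : (0:ℚ) ≤ μ - 1), mul_le_mul_of_nonneg_left hχ' (by linarith : (0:ℚ) ≤ 2*μ - 1)]
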